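/- arXiv:2601.18062 — 3 statements merged into one kernel-verified Lean document; each statement's English description precedes it below -/
import Mathlib

section
/- Let B be a nonempty open box in ℝⁿ (a product of n nonempty open intervals) and let X ⊆ B be a closed subset of B that is contained in a finite union of graphs of continuous functions of at most n−2 of the coordinates (equivalently, X has topological dimension < n−1 and is 'tame'). Concretely: if X ⊆ B is closed in B and for every coordinate projection π : ℝⁿ → ℝ^{n−1} the image π(X) has empty interior, and X is a finite union of sets each of which is the graph of a continuous map over a subset of some (n−2)-dimensional coordinate subspace, then B \ X is path-connected. -/
/-- A set `S ⊆ ℝⁿ` is a coordinate graph over at most `k` coordinates if it is the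
graph of a continuous map defined on a subset of a `k`-dimensional coordinate
subspace (the remaining coordinates are continuous functions of coordinates in `s`). -/
def IsCoordGraph (n k : ℕ) (S : Set (Fin n → ℝ)) : Prop :=
  ∃ s : Finset (Fin n), s.card ≤ k ∧
    ∃ (D : Set ({ i // i ∈ s } → ℝ)) (g : ({ i // i ∈ s } → ℝ) → (Fin n → ℝ)),
      ContinuousOn g D ∧
      S = {x | (fun i : { i // i ∈ s } => x i.1) ∈ D ∧ x = g (fun i => x i.1)}

/-!
Two points `z, w` of the box are joined by the staircase path that changes one coordinate at a
time, the `i`-th leg moving only coordinate `i`. That leg lies in a line parallel to the `i`-th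
axis, so it misses `X` as soon as its projection forgetting coordinate `i`, which depends only on
`(z, w)`, avoids the projection of `X`. Being closed in an open box, `X` is σ-compact, so each
projection of `X` is meagre, and so is the set of pairs `(z, w)` for which some leg is blocked,
since the map sending a pair to that projection is an open linear surjection. Hence generic
pairs are joined, and local path-connectedness of the open set `B \ X` finishes the proof.
-/

open Set Topology

def stair {d : ℕ} {α : Type*} (z w : Fin d → α) (k : ℕ) : Fin d → α :=
  fun r => if (r : ℕ) < k then w r else z r

section Stair

variable {d : ℕ} {α : Type*}

@[simp] lemma stair_zero (z w : Fin d → α) : stair z w 0 = z := by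
  funext r; simp [stair]

lemma stair_of_le (z w : Fin d → α) {k : ℕ} (hk : d ≤ k) : stair z w k = w := by
  funext r; simp [stair, r.isLt.trans_le hk]

lemma stair_succ_apply_of_ne (z w : Fin d → α) {k : ℕ} {r : Fin d} (hr : (r : ℕ) ≠ k) :
    stair z w (k + 1) r = stair z w k r := by
  unfold stair
  split_ifs <;> first | rfl | omega

lemma stair_mem_pi {T : Fin d → Set α} {z w : Fin d → α} (hz : z ∈ univ.pi T)
    (hw : w ∈ univ.pi T) (k : ℕ) : stair z w k ∈ univ.pi T := by
  intro r _
  unfold stair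
  split_ifs
  exacts [hw r trivial, hz r trivial]

end Stair

section Coordinates

variable {n : ℕ}

lemma joinedIn_diff_of_removeNth_eq {S X : Set (Fin (n + 1) → ℝ)} (hS : Convex ℝ S)
    {i : Fin (n + 1)} {x y : Fin (n + 1) → ℝ} (hx : x ∈ S) (hy : y ∈ S)
    (hxy : Fin.removeNth i x = Fin.removeNth i y)
    (hxX : Fin.removeNth i x ∉ Fin.removeNth i '' X) :
    JoinedIn (S \ X) x y := by
  refine JoinedIn.of_segment_subset fun p hp => ⟨hS.segment_subset hx hy hp, fun hpX => hxX ?_⟩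
  obtain ⟨a, b, -, -, hab, rfl⟩ := hp
  refine ⟨_, hpX, funext fun j => ?_⟩
  have hj : x (i.succAbove j) = y (i.succAbove j) := congrFun hxy j
  simp only [Fin.removeNth, Pi.add_apply, Pi.smul_apply, smul_eq_mul, ← hj, ← add_mul, hab,
    one_mul]

theorem joinedIn_pi_diff_of_stair {T : Fin (n + 1) → Set ℝ} (hT : ∀ i, Convex ℝ (T i))
    {X : Set (Fin (n + 1) → ℝ)} {z w : Fin (n + 1) → ℝ} (hz : z ∈ univ.pi T)
    (hw : w ∈ univ.pi T)
    (hgood : ∀ i : Fin (n + 1), Fin.removeNth i (stair z w i) ∉ Fin.removeNth i '' X) :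
    JoinedIn (univ.pi T \ X) z w := by
  have hstep : ∀ k, (hk : k < n + 1) →
      JoinedIn (univ.pi T \ X) (stair z w k) (stair z w (k + 1)) := by
    intro k hk
    have hflat :
        Fin.removeNth ⟨k, hk⟩ (stair z w k) = Fin.removeNth ⟨k, hk⟩ (stair z w (k + 1)) :=
      funext fun j => (stair_succ_apply_of_ne z w
        (Fin.val_ne_of_ne (Fin.succAbove_ne ⟨k, hk⟩ j))).symm
    exact joinedIn_diff_of_removeNth_eq (convex_pi fun i _ => hT i) (stair_mem_pi hz hw k)
      (stair_mem_pi hz hw (k + 1)) hflat (hgood ⟨k, hk⟩)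
  have hchain : ∀ k ≤ n + 1, JoinedIn (univ.pi T \ X) z (stair z w k) := by
    intro k hk
    induction k with
    | zero => simpa using JoinedIn.refl (hstep 0 n.succ_pos).mem.1
    | succ k ih => exact (ih (by omega)).trans (hstep k hk)
  simpa [stair_of_le] using hchain (n + 1) le_rfl

def stairProj (i : Fin (n + 1)) :
    ((Fin (n + 1) → ℝ) × (Fin (n + 1) → ℝ)) →ₗ[ℝ] (Fin n → ℝ) where
  toFun u := Fin.removeNth i (stair u.1 u.2 i)
  map_add' u v := by
    funext j
    simp only [Fin.removeNth, stair, Prod.fst_add, Prod.snd_add, Pi.add_apply]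
    split_ifs <;> rfl
  map_smul' c u := by
    funext j
    simp only [Fin.removeNth, stair, Prod.smul_fst, Prod.smul_snd, Pi.smul_apply,
      RingHom.id_apply]
    split_ifs <;> rfl

lemma stairProj_surjective (i : Fin (n + 1)) : Function.Surjective (stairProj i) := by
  intro y
  refine ⟨(Fin.insertNth i 0 y, Fin.insertNth i 0 y), ?_⟩
  have : ∀ z : Fin (n + 1) → ℝ, stair z z i = z := fun z => by funext r; simp [stair]
  simp [stairProj, this]

end Coordinates

lemma IsSigmaCompact.isMeagre {X : Type*} [TopologicalSpace X] [T2Space X] {s : Set X}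
    (hs : IsSigmaCompact s) (h : interior s = ∅) : IsMeagre s := by
  obtain ⟨K, hK, rfl⟩ := hs
  refine isMeagre_iUnion fun k => IsNowhereDense.isMeagre ?_
  rw [(hK k).isClosed.isNowhereDense_iff]
  exact subset_eq_empty (interior_mono (subset_iUnion K k)) h

lemma IsOpen.isSigmaCompact_of_isClosed_preimage {X : Type*} [TopologicalSpace X]
    [LocallyCompactSpace X] [SecondCountableTopology X] {U s : Set X} (hU : IsOpen U)
    (hsU : s ⊆ U)
    (hs : IsClosed (Subtype.val ⁻¹' s : Set U)) : IsSigmaCompact s := by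
  have := hU.locallyCompactSpace
  have hsub : IsSigmaCompact (Subtype.val ⁻¹' s : Set U) :=
    isSigmaCompact_univ.of_isClosed_subset hs (subset_univ _)
  simpa [Subtype.image_preimage_coe, inter_eq_right.mpr hsU] using
    hsub.image continuous_subtype_val

lemma IsOpen.diff_of_isClosed_preimage {X : Type*} [TopologicalSpace X] {U s : Set X}
    (hU : IsOpen U) (hs : IsClosed (Subtype.val ⁻¹' s : Set U)) : IsOpen (U \ s) := by
  simpa [← preimage_compl, Subtype.image_preimage_coe, sdiff_eq] using
    hU.isOpenMap_subtype_val _ hs.isOpen_compl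

theorem dense_setOf_forall_stairProj_notMem {n : ℕ} {X : Set (Fin (n + 1) → ℝ)}
    (hX : IsSigmaCompact X)
    (hint : ∀ i : Fin (n + 1), interior (Fin.removeNth i '' X) = ∅) :
    Dense {u | ∀ i, stairProj i u ∉ Fin.removeNth i '' X} := by
  have hbad : IsMeagre (⋃ i, stairProj i ⁻¹' (Fin.removeNth i '' X)) :=
    isMeagre_iUnion fun i =>
      ((hX.image (continuous_pi fun j => continuous_apply _)).isMeagre
        (hint i)).preimage_of_isOpenMap (stairProj i).continuous_of_finiteDimensional
        ((stairProj i).isOpenMap_of_finiteDimensional (stairProj_surjective i))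
  have hgood : {u | ∀ i, stairProj i u ∉ Fin.removeNth i '' X} =
      (⋃ i, stairProj i ⁻¹' (Fin.removeNth i '' X))ᶜ := by
    ext u; simp
  exact dense_of_mem_residual (hgood ▸ hbad)

theorem IsOpen.isPathConnected_of_dense_joinedIn {X : Type*} [TopologicalSpace X]
    [LocallyPathConnectedSpace X] {U : Set X} (hU : IsOpen U) (hne : U.Nonempty)
    {G : Set (X × X)} (hG : Dense G)
    (hjoin : ∀ u ∈ G, u.1 ∈ U → u.2 ∈ U → JoinedIn U u.1 u.2) :
    IsPathConnected U := by
  refine isPathConnected_iff.2 ⟨hne, fun p hp q hq => ?_⟩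
  obtain ⟨u, huG, hpu, huq⟩ :=
    hG.exists_mem_open ((hU.pathComponentIn p).prod (hU.pathComponentIn q))
      ⟨(p, q), mem_pathComponentIn_self hp, mem_pathComponentIn_self hq⟩
  exact (hpu.trans (hjoin u huG hpu.mem.2 huq.mem.2)).trans (JoinedIn.symm huq)

theorem stmt_1_general (n : ℕ) (a b : Fin (n + 1) → ℝ) (hab : ∀ i, a i < b i)
    (B : Set (Fin (n + 1) → ℝ))
    (hB : B = Set.pi Set.univ fun i => Set.Ioo (a i) (b i))
    (X : Set (Fin (n + 1) → ℝ)) (hXB : X ⊆ B)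
    (hXclosed : IsClosed ((Subtype.val : B → (Fin (n + 1) → ℝ)) ⁻¹' X))
    (hproj : ∀ i : Fin (n + 1),
      interior ((fun x : Fin (n + 1) → ℝ => fun j : Fin n => x (i.succAbove j)) '' X) = ∅) :
    IsPathConnected (B \ X) := by
  have hBopen : IsOpen B := hB ▸ isOpen_set_pi finite_univ fun i _ => isOpen_Ioo
  have hBne : B.Nonempty := hB ▸ univ_pi_nonempty_iff.2 fun i => nonempty_Ioo.2 (hab i)
  have hXσ := hBopen.isSigmaCompact_of_isClosed_preimage hXB hXclosed
  have hG := dense_setOf_forall_stairProj_notMem hXσ hproj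
  have hjoin : ∀ u ∈ {u | ∀ i, stairProj i u ∉ Fin.removeNth i '' X},
      u.1 ∈ B → u.2 ∈ B → JoinedIn (B \ X) u.1 u.2 := by
    subst hB
    exact fun u hu h₁ h₂ => joinedIn_pi_diff_of_stair (fun i => convex_Ioo _ _) h₁ h₂ hu
  obtain ⟨u, huG, hu₁, hu₂⟩ := hG.exists_mem_open (hBopen.prod hBopen) (hBne.prod hBne)
  exact (hBopen.diff_of_isClosed_preimage hXclosed).isPathConnected_of_dense_joinedIn
    ⟨u.1, (hjoin u huG hu₁ hu₂).mem.1⟩ hG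
    fun u hu h₁ h₂ => hjoin u hu h₁.1 h₂.1

/-- Removing from a nonempty open box `B ⊆ ℝ^{n+1}` a subset `X` that is closed in `B`,
all of whose coordinate projections to ℝⁿ have empty interior, and which is a finite
union of graphs of continuous maps over at most `(n+1)-2` coordinates, leaves a
path-connected set. -/
theorem stmt_1 (n : ℕ) (a b : Fin (n + 1) → ℝ) (hab : ∀ i, a i < b i)
    (B : Set (Fin (n + 1) → ℝ))
    (hB : B = Set.pi Set.univ fun i => Set.Ioo (a i) (b i))
    (X : Set (Fin (n + 1) → ℝ)) (hXB : X ⊆ B)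
    (hXclosed : IsClosed ((Subtype.val : B → (Fin (n + 1) → ℝ)) ⁻¹' X))
    (hproj : ∀ i : Fin (n + 1),
      interior ((fun x : Fin (n + 1) → ℝ => fun j : Fin n => x (i.succAbove j)) '' X) = ∅)
    (hgraphs : ∃ (m : ℕ) (S : Fin m → Set (Fin (n + 1) → ℝ)),
      (∀ k, IsCoordGraph (n + 1) (n + 1 - 2) (S k)) ∧ X = ⋃ k, S k) :
    IsPathConnected (B \ X) :=
  stmt_1_general n a b hab B hB X hXB hXclosed hproj
end

section
/- Let B be an open box in ℝⁿ and W ⊆ B a nonempty open set with B ⊄ closure(W). Then the set B ∩ frontier(W) is nonempty; moreover, if n ≥ 2, then B ∩ frontier(W) is uncountable. -/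
open Cardinal

/-- A preconnected set meeting an open set `W` and the complement of its closure
meets the frontier of `W`. -/
lemma cross_frontier {α : Type*} [TopologicalSpace α] {s W : Set α}
    (hs : IsPreconnected s) (hW : IsOpen W)
    (h1 : (s ∩ W).Nonempty) (h2 : (s \ closure W).Nonempty) :
    (s ∩ frontier W).Nonempty := by
  by_contra h
  have hsub : s ⊆ W ∪ (closure W)ᶜ := by
    intro z hz
    by_cases hzc : z ∈ closure W
    · rw [closure_eq_self_union_frontier] at hzc
      rcases hzc with hzc | hzc
      · exact Or.inl hzc
      · exact absurd ⟨z, hz, hzc⟩ h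
    · exact Or.inr hzc
  obtain ⟨z, hzs, hzW, hzc⟩ :=
    hs W (closure W)ᶜ hW isClosed_closure.isOpen_compl hsub h1
      ⟨h2.choose, h2.choose_spec.1, h2.choose_spec.2⟩
  exact hzc (subset_closure hzW)

/-- If `W` is a nonempty open subset of an open box `B` in ℝⁿ whose closure does not
contain `B`, then `B ∩ frontier W` is nonempty, and, if `n ≥ 2`, it is uncountable. -/
theorem stmt_3 (n : ℕ) (a b : Fin n → ℝ)
    (B : Set (Fin n → ℝ)) (hB : B = Set.pi Set.univ fun i => Set.Ioo (a i) (b i))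
    (W : Set (Fin n → ℝ)) (hWopen : IsOpen W) (hWB : W ⊆ B) (hWne : W.Nonempty)
    (hncl : ¬ B ⊆ closure W) :
    (B ∩ frontier W).Nonempty ∧ (2 ≤ n → ¬ (B ∩ frontier W).Countable) := by
  have hBconv : Convex ℝ B := by
    rw [hB]; exact convex_pi fun i _ => convex_Ioo _ _
  have hBopen : IsOpen B := by
    rw [hB]; exact isOpen_set_pi Set.finite_univ fun i _ => isOpen_Ioo
  obtain ⟨w, hw⟩ := hWne
  rw [Set.not_subset] at hncl
  obtain ⟨v, hvB, hvW⟩ := hncl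
  have hwB : w ∈ B := hWB hw
  -- the segment from `w` to any point of `B \ closure W` crosses the frontier within `B`
  have key : ∀ p ∈ B, p ∉ closure W → ((B ∩ frontier W) ∩ segment ℝ w p).Nonempty := by
    intro p hpB hpW
    have hseg : segment ℝ w p ⊆ B := hBconv.segment_subset hwB hpB
    have hcross := cross_frontier ((convex_segment w p).isPreconnected) hWopen
      ⟨w, left_mem_segment ℝ w p, hw⟩ ⟨p, right_mem_segment ℝ w p, hpW⟩
    obtain ⟨q, hq1, hq2⟩ := hcross
    exact ⟨q, ⟨hseg hq1, hq2⟩, hq1⟩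
  obtain ⟨q, hq, -⟩ := key v hvB hvW
  refine ⟨⟨q, hq⟩, ?_⟩
  intro hn hcount
  -- choose `y` linearly independent from `x := w - v`
  have hwv : w ≠ v := fun h => hvW (h ▸ subset_closure hw)
  set x : Fin n → ℝ := w - v with hx
  have hx0 : x ≠ 0 := sub_ne_zero.2 hwv
  have hrank : 1 < Module.rank ℝ (Fin n → ℝ) := by
    rw [rank_fin_fun]
    exact_mod_cast (by omega : 1 < n)
  obtain ⟨y, hy⟩ := exists_linearIndependent_pair_of_one_lt_rank hrank hx0
  have hy0 : y ≠ 0 := hy.ne_zero 1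
  -- a small ball around `v` inside `B \ closure W`
  have hUopen : IsOpen (B \ closure W) := hBopen.sdiff isClosed_closure
  obtain ⟨ε, hε, hball⟩ := Metric.isOpen_iff.1 hUopen v ⟨hvB, hvW⟩
  set r : ℝ := ε / ‖y‖ with hr
  have hrpos : 0 < r := div_pos hε (norm_pos_iff.2 hy0)
  have hmem : ∀ t ∈ Set.Ioo (0 : ℝ) r, v + t • y ∈ B \ closure W := by
    intro t ht
    apply hball
    rw [Metric.mem_ball, dist_eq_norm]
    have : v + t • y - v = t • y := by abel
    rw [this, norm_smul, Real.norm_eq_abs, abs_of_pos ht.1]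
    calc t * ‖y‖ < r * ‖y‖ := by
          exact mul_lt_mul_of_pos_right ht.2 (norm_pos_iff.2 hy0)
      _ = ε := by rw [hr]; exact div_mul_cancel₀ ε (norm_ne_zero_iff.mpr hy0)
  have hvx : v + x = w := by rw [hx]; abel
  -- for each `t`, pick a frontier point on the segment from `w` to `v + t • y`
  have hchoice : ∀ t : ℝ, ∃ p, t ∈ Set.Ioo (0 : ℝ) r →
      p ∈ B ∩ frontier W ∧ p ∈ segment ℝ (v + x) (v + t • y) := by
    intro t
    by_cases ht : t ∈ Set.Ioo (0 : ℝ) r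
    · obtain ⟨p, hp1, hp2⟩ := key (v + t • y) (hmem t ht).1 (hmem t ht).2
      exact ⟨p, fun _ => ⟨hp1, by rwa [hvx]⟩⟩
    · exact ⟨w, fun h => absurd h ht⟩
  choose f hf using hchoice
  -- `f` is injective on `Ioo 0 r` and maps into `B ∩ frontier W`
  have hmaps : Set.MapsTo f (Set.Ioo (0 : ℝ) r) (B ∩ frontier W) :=
    fun t ht => (hf t ht).1
  have hinj : Set.InjOn f (Set.Ioo (0 : ℝ) r) := by
    intro t ht t' ht' heq
    by_contra hne
    have hint := segment_inter_eq_endpoint_of_linearIndependent_of_ne hy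
      (Ne.symm hne) v
    have hmem' : f t ∈ segment ℝ (v + x) (v + t • y) ∩ segment ℝ (v + x) (v + t' • y) :=
      ⟨(hf t ht).2, heq ▸ (hf t' ht').2⟩
    rw [hint] at hmem'
    have : f t = w := by rw [hmem', hvx]
    have hfw : f t ∈ W := this ▸ hw
    have hffr : f t ∈ frontier W := (hf t ht).1.2
    have hmem'' : f t ∈ W ∩ frontier W := ⟨hfw, hffr⟩
    rw [hWopen.inter_frontier_eq] at hmem''
    exact hmem''
  have hcnt : (Set.Ioo (0 : ℝ) r).Countable := hmaps.countable_of_injOn hinj hcount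
  have := Cardinal.mk_Ioo_real hrpos
  rw [Set.countable_iff_exists_injective] at hcnt
  obtain ⟨g, hg⟩ := hcnt
  have hle : #(Set.Ioo (0 : ℝ) r) ≤ Cardinal.aleph0 := by
    calc #(Set.Ioo (0 : ℝ) r) ≤ #ℕ := Cardinal.mk_le_of_injective hg
      _ = Cardinal.aleph0 := Cardinal.mk_nat
  rw [this] at hle
  exact absurd hle (not_le.2 Cardinal.aleph0_lt_continuum)
end

section
/- Let U ⊆ ℝⁿ be a bounded open set, V an open set with closure(U) ⊆ V, and f : V → ℝⁿ continuous and injective. Set H = f(U) ∩ (closure(f(U)) \ interior(f(U))). Then H is an open subset of the boundary bd(f(U)) = closure(f(U)) \ interior(f(U)) in its subspace topology. -/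
/-!
For an embedding `f` of the compact set `closure U`, `closure (f '' U) = f '' closure U`, so by
injectivity `closure (f '' U) \ f '' U = f '' frontier U`, a compact and hence closed set.
Inside any subset `B` of `closure (f '' U)`, the trace `f '' U ∩ B` is the complement of this
closed set, hence relatively open.
-/

open Set

section

variable {X Y : Type*} [TopologicalSpace X] [TopologicalSpace Y] [T2Space Y]
  {s : Set X} {f : X → Y}

theorem closure_image_diff_image_eq_image_frontier (hs : IsOpen s)
    (hsc : IsCompact (closure s)) (hf : ContinuousOn f (closure s))
    (hinj : InjOn f (closure s)) :
    closure (f '' s) \ f '' s = f '' frontier s := by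
  rw [← image_closure_of_isCompact hsc hf, ← hinj.image_sdiff_subset subset_closure,
    hs.frontier_eq]

theorem isClosed_closure_image_diff_image (hs : IsOpen s)
    (hsc : IsCompact (closure s)) (hf : ContinuousOn f (closure s))
    (hinj : InjOn f (closure s)) :
    IsClosed (closure (f '' s) \ f '' s) := by
  rw [closure_image_diff_image_eq_image_frontier hs hsc hf hinj]
  exact ((hsc.of_isClosed_subset isClosed_frontier frontier_subset_closure).image_of_continuousOn
    (hf.mono frontier_subset_closure)).isClosed

end

theorem isOpen_preimage_val_inter_of_isClosed_closure_diff {X : Type*} [TopologicalSpace X]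
    {A B : Set X} (hA : IsClosed (closure A \ A)) (hB : B ⊆ closure A) :
    IsOpen ((Subtype.val : B → X) ⁻¹' (A ∩ B)) := by
  convert (hA.preimage continuous_subtype_val).isOpen_compl using 1
  ext ⟨x, hx⟩
  simp [hB hx]

theorem stmt_6_general (n : ℕ) (U V : Set (Fin n → ℝ))
    (hU : IsOpen U) (hUbd : Bornology.IsBounded U)
    (hUV : closure U ⊆ V)
    (f : (Fin n → ℝ) → (Fin n → ℝ))
    (hf : ContinuousOn f V) (hinj : Set.InjOn f V) :
    IsOpen ((Subtype.val : (closure (f '' U) \ interior (f '' U) : Set (Fin n → ℝ)) →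
        (Fin n → ℝ)) ⁻¹' (f '' U ∩ (closure (f '' U) \ interior (f '' U)))) :=
  isOpen_preimage_val_inter_of_isClosed_closure_diff
    (isClosed_closure_image_diff_image hU hUbd.isCompact_closure (hf.mono hUV) (hinj.mono hUV))
    sdiff_subset

/-- With `U` bounded open, `closure U ⊆ V` open, `f : V → ℝⁿ` continuous injective,
the set `H = f(U) ∩ (closure (f U) \ interior (f U))` is open in the subspace topology
of the boundary `closure (f U) \ interior (f U)`. -/
theorem stmt_6 (n : ℕ) (U V : Set (Fin n → ℝ))
    (hU : IsOpen U) (hUbd : Bornology.IsBounded U)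
    (hV : IsOpen V) (hUV : closure U ⊆ V)
    (f : (Fin n → ℝ) → (Fin n → ℝ))
    (hf : ContinuousOn f V) (hinj : Set.InjOn f V) :
    IsOpen ((Subtype.val : (closure (f '' U) \ interior (f '' U) : Set (Fin n → ℝ)) →
        (Fin n → ℝ)) ⁻¹' (f '' U ∩ (closure (f '' U) \ interior (f '' U)))) :=
  stmt_6_general n U V hU hUbd hUV f hf hinj
end
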